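/- arXiv:2501.15462 — 4 statements merged into one kernel-verified Lean document; each statement's English description precedes it below -/
import Mathlib

section
/- Let G and H be countable discrete groups, p, q > 0 real numbers, and E ⊆ G, F ⊆ H subsets such that for every finitely supported function f : G → ℂ with support contained in E, the operator norm of the left convolution operator λ_G(f) on ℓ²(G) is at most p·‖f‖₂, and for every finitely supported f' : H → ℂ with support contained in F, ‖λ_H(f')‖ ≤ q·‖f'‖₂. Then for every finitely supported φ : G × H → ℂ with support contained in E × F, the operator norm of λ_{G×H}(φ) on ℓ²(G × H) is at most p·q·‖φ‖₂. -/
/-!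
Slice `φ` along `G`: with `φₐ := φ(a, ·)`, one has `(φ * ω)(g, h) = Σₐ (φₐ * ω(a⁻¹g, ·))(h)`.
For fixed `g`, Minkowski's inequality in `ℓ²(H)` and the bound on `F` give
`‖(φ * ω)(g, ·)‖₂ ≤ q Σₐ ‖φₐ‖₂ ‖ω(a⁻¹g, ·)‖₂ = q (v * u)(g)`, where `v(a) = ‖φₐ‖₂` is supported
in `E` and `u(c) = ‖ω(c, ·)‖₂`. Summing over `g` and applying the bound on `E` to `v * u`
gives `‖φ * ω‖₂² ≤ q² p² ‖v‖₂² ‖u‖₂² = p² q² ‖φ‖₂² ‖ω‖₂²`.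
-/

open scoped BigOperators

/-- The convolution of a finitely supported function with an arbitrary function
on a group: `(f * ω)(g) = Σ_h f(h) ω(h⁻¹ g)`. -/
noncomputable def conv {G : Type*} [Group G] (f : G →₀ ℂ) (ω : G → ℂ) : G → ℂ :=
  fun g => ∑ h ∈ f.support, f h * ω (h⁻¹ * g)

/-- The squared ℓ²-norm of a finitely supported function. -/
noncomputable def l2sq {G : Type*} (f : G →₀ ℂ) : ℝ :=
  ∑ g ∈ f.support, ‖f g‖ ^ 2

/-- `OpBound p f` says that the left convolution operator `λ(f)` on `ℓ²` has operator
norm at most `p · ‖f‖₂`, expressed via the (squared) norm inequality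
`‖f * ω‖₂² ≤ p² ‖f‖₂² ‖ω‖₂²` for every `ω ∈ ℓ²`. -/
def OpBound {G : Type*} [Group G] (p : ℝ) (f : G →₀ ℂ) : Prop :=
  ∀ ω : G → ℂ, Summable (fun g => ‖ω g‖ ^ 2) →
    ∑' g, ‖conv f ω g‖ ^ 2 ≤ p ^ 2 * l2sq f * ∑' g, ‖ω g‖ ^ 2

section SquareSummable

variable {α E : Type*} [NormedAddCommGroup E]

lemma memℓp_two_iff_summable_sq_norm (f : α → E) :
    Memℓp f 2 ↔ Summable fun a => ‖f a‖ ^ 2 := by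
  rw [memℓp_gen_iff (by norm_num)]
  norm_num

noncomputable def toLp2 (f : α → E) (hf : Summable fun a => ‖f a‖ ^ 2) :
    lp (fun _ : α => E) 2 :=
  ⟨f, (memℓp_two_iff_summable_sq_norm f).2 hf⟩

lemma norm_toLp2 (f : α → E) (hf : Summable fun a => ‖f a‖ ^ 2) :
    ‖toLp2 f hf‖ = √(∑' a, ‖f a‖ ^ 2) := by
  have h := lp.norm_rpow_eq_tsum (p := 2) (by norm_num) (toLp2 f hf)
  norm_num at h
  exact (Real.sqrt_sq (norm_nonneg _)).symm.trans (congrArg Real.sqrt h)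

lemma coe_sum_toLp2 {ι : Type*} (s : Finset ι) (F : ι → α → E)
    (hF : ∀ i, Summable fun a => ‖F i a‖ ^ 2) :
    ⇑(∑ i ∈ s, toLp2 (F i) (hF i)) = ∑ i ∈ s, F i := by
  rw [lp.coeFn_sum]
  rfl

lemma summable_sq_norm_finset_sum {ι : Type*} (s : Finset ι) (F : ι → α → E)
    (hF : ∀ i, Summable fun a => ‖F i a‖ ^ 2) :
    Summable fun a => ‖∑ i ∈ s, F i a‖ ^ 2 := by
  have h := (memℓp_two_iff_summable_sq_norm _).1 (lp.memℓp (∑ i ∈ s, toLp2 (F i) (hF i)))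
  simpa only [coe_sum_toLp2, Finset.sum_apply] using h

lemma sqrt_tsum_sq_norm_finset_sum_le {ι : Type*} (s : Finset ι) (F : ι → α → E)
    (hF : ∀ i, Summable fun a => ‖F i a‖ ^ 2) :
    √(∑' a, ‖∑ i ∈ s, F i a‖ ^ 2) ≤ ∑ i ∈ s, √(∑' a, ‖F i a‖ ^ 2) := by
  have hsum := summable_sq_norm_finset_sum s F hF
  have hsum_eq : toLp2 (fun a => ∑ i ∈ s, F i a) hsum = ∑ i ∈ s, toLp2 (F i) (hF i) := by
    ext1
    rw [coe_sum_toLp2]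
    funext a
    exact (Finset.sum_apply a s F).symm
  calc √(∑' a, ‖∑ i ∈ s, F i a‖ ^ 2) = ‖∑ i ∈ s, toLp2 (F i) (hF i)‖ := by
        rw [← hsum_eq, norm_toLp2]
    _ ≤ ∑ i ∈ s, ‖toLp2 (F i) (hF i)‖ := norm_sum_le _ _
    _ = ∑ i ∈ s, √(∑' a, ‖F i a‖ ^ 2) := by simp only [norm_toLp2]

end SquareSummable

lemma l2sq_nonneg {α : Type*} (f : α →₀ ℂ) : 0 ≤ l2sq f :=
  Finset.sum_nonneg fun _ _ => sq_nonneg _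

section Convolution

variable {G : Type*} [Group G]

lemma summable_sq_norm_conv (f : G →₀ ℂ) {ω : G → ℂ} (hω : Summable fun g => ‖ω g‖ ^ 2) :
    Summable fun g => ‖conv f ω g‖ ^ 2 := by
  refine summable_sq_norm_finset_sum f.support (fun h g => f h * ω (h⁻¹ * g)) fun h => ?_
  simp only [norm_mul, mul_pow]
  exact (hω.comp_injective (mul_right_injective h⁻¹)).mul_left _

lemma OpBound.sqrt_tsum_sq_norm_conv_le {p : ℝ} {f : G →₀ ℂ} (hf : OpBound p f) {ω : G → ℂ}
    (hω : Summable fun g => ‖ω g‖ ^ 2) :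
    √(∑' g, ‖conv f ω g‖ ^ 2) ≤ |p| * √(l2sq f) * √(∑' g, ‖ω g‖ ^ 2) := by
  calc √(∑' g, ‖conv f ω g‖ ^ 2) ≤ √(p ^ 2 * l2sq f * ∑' g, ‖ω g‖ ^ 2) :=
        Real.sqrt_le_sqrt (hf ω hω)
    _ = |p| * √(l2sq f) * √(∑' g, ‖ω g‖ ^ 2) := by
        rw [Real.sqrt_mul (mul_nonneg (sq_nonneg p) (l2sq_nonneg f)),
          Real.sqrt_mul (sq_nonneg p), Real.sqrt_sq_eq_abs]

end Convolution

section Rows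

variable {α β : Type*}

noncomputable def rowL2 (φ : α × β →₀ ℂ) : α →₀ ℂ :=
  φ.curry.mapRange (fun f => ((√(l2sq f) : ℝ) : ℂ)) (by simp [l2sq])

noncomputable def rowL2Fun (ω : α × β → ℂ) (a : α) : ℂ :=
  ((√(∑' b, ‖ω (a, b)‖ ^ 2) : ℝ) : ℂ)

lemma sq_norm_ofReal_sqrt {x : ℝ} (hx : 0 ≤ x) : ‖((√x : ℝ) : ℂ)‖ ^ 2 = x := by
  rw [Complex.norm_real, Real.norm_eq_abs, sq_abs, Real.sq_sqrt hx]

lemma l2sq_rowL2 (φ : α × β →₀ ℂ) : l2sq (rowL2 φ) = l2sq φ := by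
  change (rowL2 φ).sum (fun _ c => ‖c‖ ^ 2) = φ.sum fun _ c => ‖c‖ ^ 2
  rw [rowL2, Finsupp.sum_mapRange_index (by simp),
    ← Finsupp.sum_curry_index φ fun _ _ c => ‖c‖ ^ 2]
  exact Finset.sum_congr rfl fun a _ => sq_norm_ofReal_sqrt (l2sq_nonneg _)

lemma support_rowL2_subset [DecidableEq α] (φ : α × β →₀ ℂ) :
    (rowL2 φ).support ⊆ φ.support.image Prod.fst :=
  Finsupp.support_mapRange.trans (Finsupp.support_curry φ).le

lemma support_curry_apply_subset {M : Type*} [Zero M] {s : Set α} {t : Set β} {φ : α × β →₀ M}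
    (hφ : ↑φ.support ⊆ s ×ˢ t) (a : α) : ↑(φ.curry a).support ⊆ t :=
  fun b hb => (@hφ (a, b) (Finsupp.mem_support_iff.2 ((φ.curry a).mem_support_iff.1 hb))).2

lemma support_rowL2_subset_of_subset_prod {s : Set α} {t : Set β}
    {φ : α × β →₀ ℂ} (hφ : ↑φ.support ⊆ s ×ˢ t) : ↑(rowL2 φ).support ⊆ s := by
  classical
  intro a ha
  obtain ⟨x, hx, rfl⟩ := Finset.mem_image.1 (support_rowL2_subset φ ha)
  exact (hφ hx).1

lemma summable_sq_norm_rowL2Fun {ω : α × β → ℂ} (hω : Summable fun x => ‖ω x‖ ^ 2) :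
    Summable fun a => ‖rowL2Fun ω a‖ ^ 2 := by
  simp only [rowL2Fun, sq_norm_ofReal_sqrt (tsum_nonneg fun _ => sq_nonneg _)]
  exact ((summable_prod_of_nonneg fun _ => sq_nonneg _).1 hω).2

lemma tsum_sq_norm_rowL2Fun {ω : α × β → ℂ} (hω : Summable fun x => ‖ω x‖ ^ 2) :
    ∑' a, ‖rowL2Fun ω a‖ ^ 2 = ∑' x, ‖ω x‖ ^ 2 := by
  simp only [rowL2Fun, sq_norm_ofReal_sqrt (tsum_nonneg fun _ => sq_nonneg _)]
  exact hω.tsum_prod.symm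

end Rows

section ProductGroup

variable {G H : Type*} [Group G]

lemma conv_prod_apply [Group H] (φ : G × H →₀ ℂ) (ω : G × H → ℂ) (g : G) (h : H) :
    conv φ ω (g, h) = ∑ a ∈ φ.curry.support, conv (φ.curry a) (fun c => ω (a⁻¹ * g, c)) h :=
  (Finsupp.sum_curry_index φ fun a b c => c * ω (a⁻¹ * g, b⁻¹ * h)).symm

lemma norm_conv_rowL2 (φ : G × H →₀ ℂ) (ω : G × H → ℂ) (g : G) :
    ‖conv (rowL2 φ) (rowL2Fun ω) g‖
      = ∑ a ∈ φ.curry.support, √(l2sq (φ.curry a)) * √(∑' h, ‖ω (a⁻¹ * g, h)‖ ^ 2) := by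
  have hconv : conv (rowL2 φ) (rowL2Fun ω) g
      = ((∑ a ∈ φ.curry.support,
          √(l2sq (φ.curry a)) * √(∑' h, ‖ω (a⁻¹ * g, h)‖ ^ 2) : ℝ) : ℂ) := by
    change (rowL2 φ).sum (fun a c => c * rowL2Fun ω (a⁻¹ * g)) = _
    rw [rowL2, Finsupp.sum_mapRange_index (by simp)]
    simp only [Finsupp.sum, rowL2Fun]
    push_cast
    rfl
  rw [hconv, Complex.norm_real, Real.norm_eq_abs, abs_of_nonneg (by positivity)]

lemma tsum_sq_norm_conv_prod_le [Group H] {q : ℝ} {φ : G × H →₀ ℂ}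
    (hφ : ∀ a, OpBound q (φ.curry a)) {ω : G × H → ℂ} (hω : Summable fun x => ‖ω x‖ ^ 2) (g : G) :
    ∑' h, ‖conv φ ω (g, h)‖ ^ 2 ≤ q ^ 2 * ‖conv (rowL2 φ) (rowL2Fun ω) g‖ ^ 2 := by
  have hrow : ∀ c, Summable fun h => ‖ω (c, h)‖ ^ 2 :=
    fun c => hω.comp_injective (Prod.mk_right_injective c)
  have hslices : ∀ a, Summable fun h => ‖conv (φ.curry a) (fun c => ω (a⁻¹ * g, c)) h‖ ^ 2 :=
    fun a => summable_sq_norm_conv _ (hrow _)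
  have hsqrt : √(∑' h, ‖conv φ ω (g, h)‖ ^ 2) ≤ |q| * ‖conv (rowL2 φ) (rowL2Fun ω) g‖ :=
    calc √(∑' h, ‖conv φ ω (g, h)‖ ^ 2)
        ≤ ∑ a ∈ φ.curry.support,
            √(∑' h, ‖conv (φ.curry a) (fun c => ω (a⁻¹ * g, c)) h‖ ^ 2) := by
          simp only [conv_prod_apply]
          exact sqrt_tsum_sq_norm_finset_sum_le _ _ hslices
      _ ≤ ∑ a ∈ φ.curry.support,
            |q| * √(l2sq (φ.curry a)) * √(∑' h, ‖ω (a⁻¹ * g, h)‖ ^ 2) :=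
          Finset.sum_le_sum fun a _ => (hφ a).sqrt_tsum_sq_norm_conv_le (hrow _)
      _ = |q| * ‖conv (rowL2 φ) (rowL2Fun ω) g‖ := by
          simp only [norm_conv_rowL2, Finset.mul_sum, mul_assoc]
  rw [← sq_abs q, ← mul_pow]
  exact (Real.sqrt_le_iff.1 hsqrt).2

end ProductGroup

theorem stmt0_general {G H : Type*} [Group G] [Group H]
    (p q : ℝ) (E : Set G) (F : Set H)
    (hG : ∀ f : G →₀ ℂ, ↑f.support ⊆ E → OpBound p f)
    (hH : ∀ f' : H →₀ ℂ, ↑f'.support ⊆ F → OpBound q f')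
    (φ : (G × H) →₀ ℂ) (hφ : ↑φ.support ⊆ E ×ˢ F) :
    OpBound (p * q) φ := by
  intro ω hω
  have hrows : ∀ a, OpBound q (φ.curry a) := fun a => hH _ (support_curry_apply_subset hφ a)
  have hu := summable_sq_norm_rowL2Fun hω
  have hconv := summable_sq_norm_conv φ hω
  calc ∑' x, ‖conv φ ω x‖ ^ 2 = ∑' g, ∑' h, ‖conv φ ω (g, h)‖ ^ 2 := hconv.tsum_prod
    _ ≤ ∑' g, q ^ 2 * ‖conv (rowL2 φ) (rowL2Fun ω) g‖ ^ 2 :=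
        Summable.tsum_le_tsum (tsum_sq_norm_conv_prod_le hrows hω)
          ((summable_prod_of_nonneg fun _ => sq_nonneg _).1 hconv).2
          ((summable_sq_norm_conv _ hu).mul_left _)
    _ = q ^ 2 * ∑' g, ‖conv (rowL2 φ) (rowL2Fun ω) g‖ ^ 2 := tsum_mul_left
    _ ≤ q ^ 2 * (p ^ 2 * l2sq (rowL2 φ) * ∑' a, ‖rowL2Fun ω a‖ ^ 2) :=
        mul_le_mul_of_nonneg_left (hG _ (support_rowL2_subset_of_subset_prod hφ) _ hu)
          (sq_nonneg q)
    _ = (p * q) ^ 2 * l2sq φ * ∑' x, ‖ω x‖ ^ 2 := by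
        rw [l2sq_rowL2, tsum_sq_norm_rowL2Fun hω]
        ring

/-- If `‖λ_G(f)‖ ≤ p‖f‖₂` for all `f` supported in `E ⊆ G`, and
`‖λ_H(f')‖ ≤ q‖f'‖₂` for all `f'` supported in `F ⊆ H`, then
`‖λ_{G×H}(φ)‖ ≤ pq‖φ‖₂` for all `φ` supported in `E × F`. -/
theorem stmt0 {G H : Type*} [Group G] [Group H] [Countable G] [Countable H]
    (p q : ℝ) (hp : 0 < p) (hq : 0 < q) (E : Set G) (F : Set H)
    (hG : ∀ f : G →₀ ℂ, ↑f.support ⊆ E → OpBound p f)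
    (hH : ∀ f' : H →₀ ℂ, ↑f'.support ⊆ F → OpBound q f')
    (φ : (G × H) →₀ ℂ) (hφ : ↑φ.support ⊆ E ×ˢ F) :
    OpBound (p * q) φ :=
  stmt0_general p q E F hG hH φ hφ
end

section
/- Let G be a finitely generated group and S = {g₁,…,g_N} a minimal generating set for G (i.e. |S| = rank(G), the smallest cardinality of a generating set). Assume that the ball B₂^G of radius 2 in the word metric with respect to S contains no element of order two. Then for every g ∈ G with g ≠ e, the number of pairs (s,t) ∈ S × S with s⁻¹t = g is at most 1; that is, ℕ_{S,G} := max_{g≠e} |{(s,t) ∈ S×S : s⁻¹t = g}| = 1. -/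
/-!
If `s⁻¹t = s'⁻¹t'` for two different pairs of generators, then `t' = s's⁻¹t` expresses `t'`
through the other generators unless `t' = s`; in that case `t = ss'⁻¹s` expresses `t` through
the others unless also `s' = t`. Both redundancies contradict minimality, and in the remaining
case `g = s⁻¹t = t⁻¹s = g⁻¹` is an element of order two in `B₂`.
-/

open scoped Classical

/-- The ball of radius 2 in the word metric of `G` with respect to a generating
set `S`: products of at most two elements of `S ∪ S⁻¹`. -/
def ballTwo {G : Type*} [Group G] (S : Set G) : Set G :=
  {g : G | ∃ l : List G, l.length ≤ 2 ∧ (∀ x ∈ l, x ∈ S ∨ x⁻¹ ∈ S) ∧ l.prod = g}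

namespace Subgroup

variable {G : Type*} [Group G]

lemma mem_closure_erase_of_mem {S : Finset G} {x y : G} (hy : y ∈ S) (hyx : y ≠ x) :
    y ∈ closure (S.erase x : Set G) :=
  subset_closure (Finset.mem_erase.mpr ⟨hyx, hy⟩)

lemma closure_erase_eq_of_mem {S : Finset G} {x : G}
    (hx : x ∈ closure (S.erase x : Set G)) : closure (S.erase x : Set G) = closure S := by
  refine le_antisymm (closure_mono (Finset.erase_subset x S)) (closure_le _ |>.mpr ?_)
  intro y hy
  by_cases hyx : y = x
  · exact hyx ▸ hx
  · exact mem_closure_erase_of_mem hy hyx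

lemma notMem_closure_erase_of_minimal {S : Finset G} (hgen : closure (S : Set G) = ⊤)
    (hmin : ∀ T : Finset G, closure (T : Set G) = ⊤ → S.card ≤ T.card) {x : G} (hx : x ∈ S) :
    x ∉ closure (S.erase x : Set G) := fun hmem => by
  have := hmin _ ((closure_erase_eq_of_mem hmem).trans hgen)
  have := Finset.card_erase_lt_of_mem hx
  omega

lemma eq_swap_of_inv_mul_eq {S : Finset G}
    (hind : ∀ x ∈ S, x ∉ closure (S.erase x : Set G)) {s t s' t' : G}
    (hs : s ∈ S) (ht : t ∈ S) (hs' : s' ∈ S) (ht' : t' ∈ S) (hst : s ≠ t)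
    (heq : s⁻¹ * t = s'⁻¹ * t') (hne : (s, t) ≠ (s', t')) : s' = t ∧ t' = s := by
  have htt' : t ≠ t' := by
    rintro rfl
    exact hne (by rw [inv_injective (mul_right_cancel heq)])
  have hst' : s' ≠ t' := by
    rintro rfl
    rw [inv_mul_cancel, inv_mul_eq_one] at heq
    exact hst heq
  have ht's : t' = s := by
    by_contra ht's
    refine hind t' ht' ?_
    have key : s' * s⁻¹ * t ∈ closure (S.erase t' : Set G) :=
      mul_mem (mul_mem (mem_closure_erase_of_mem hs' hst')
        (inv_mem (mem_closure_erase_of_mem hs (Ne.symm ht's))))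
        (mem_closure_erase_of_mem ht htt')
    rwa [mul_assoc, heq, mul_inv_cancel_left] at key
  refine ⟨?_, ht's⟩
  by_contra hs't
  refine hind t ht ?_
  have key : s * s'⁻¹ * s ∈ closure (S.erase t : Set G) :=
    mul_mem (mul_mem (mem_closure_erase_of_mem hs hst)
      (inv_mem (mem_closure_erase_of_mem hs' hs't))) (mem_closure_erase_of_mem hs hst)
  rwa [mul_assoc, show s'⁻¹ * s = s⁻¹ * t by rw [heq, ht's], mul_inv_cancel_left] at key

end Subgroup

lemma inv_mul_mem_ballTwo {G : Type*} [Group G] {S : Set G} {s t : G} (hs : s ∈ S)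
    (ht : t ∈ S) : s⁻¹ * t ∈ ballTwo S :=
  ⟨[s⁻¹, t], by simp, by simp [hs, ht], by simp⟩

theorem stmt4_general {G : Type*} [Group G] (S : Finset G)
    (hgen : Subgroup.closure (S : Set G) = ⊤)
    (hmin : ∀ T : Finset G, Subgroup.closure (T : Set G) = ⊤ → S.card ≤ T.card)
    (hno2 : ∀ g ∈ ballTwo (S : Set G), g ^ 2 = 1 → g = 1) :
    ∀ g : G, g ≠ 1 →
      ((S ×ˢ S).filter (fun st : G × G => st.1⁻¹ * st.2 = g)).card ≤ 1 := by
  intro g hg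
  rw [Finset.card_le_one]
  rintro ⟨s, t⟩ hmem ⟨s', t'⟩ hmem'
  simp only [Finset.mem_filter, Finset.mem_product] at hmem hmem'
  obtain ⟨⟨hs, ht⟩, rfl⟩ := hmem
  obtain ⟨⟨hs', ht'⟩, heq⟩ := hmem'
  by_contra hne
  have hst : s ≠ t := by rintro rfl; exact hg (inv_mul_cancel s)
  obtain ⟨hs't, ht's⟩ := Subgroup.eq_swap_of_inv_mul_eq
    (fun x hx => Subgroup.notMem_closure_erase_of_minimal hgen hmin hx)
    hs ht hs' ht' hst heq.symm hne
  have hsq : (s⁻¹ * t) ^ 2 = 1 := by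
    rw [sq]; nth_rewrite 1 [← heq, hs't, ht's]; group
  exact hg (hno2 _ (inv_mul_mem_ballTwo hs ht) hsq)

/-- If `S` is a minimal finite generating set of `G` (not containing `e`)
and the ball `B₂^G` contains no element of order two, then for every `g ≠ e` there is at
most one pair `(s,t) ∈ S × S` with `s⁻¹t = g`; i.e. `ℕ_{S,G} = 1`. -/
theorem stmt4 {G : Type*} [Group G] (S : Finset G)
    (hS1 : (1 : G) ∉ S)
    (hgen : Subgroup.closure (S : Set G) = ⊤)
    (hmin : ∀ T : Finset G, Subgroup.closure (T : Set G) = ⊤ → S.card ≤ T.card)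
    (hno2 : ∀ g ∈ ballTwo (S : Set G), g ^ 2 = 1 → g = 1) :
    ∀ g : G, g ≠ 1 →
      ((S ×ˢ S).filter (fun st : G × G => st.1⁻¹ * st.2 = g)).card ≤ 1 :=
  stmt4_general S hgen hmin hno2
end

section
/- Let G be a group with minimal generating set S = {g₁,…,g_N} (|S| = rank(G)). If g_i⁻¹ g_j = g_k⁻¹ g_l ≠ e for some indices 1 ≤ i,j,k,l ≤ N with (i,j) ≠ (k,l), then g_i = g_l, g_j = g_k, and the element g_i⁻¹ g_j has order two. -/
/-!
If `x = p * q⁻¹ * r` with `p, q, r ∈ S` all different from `x`, then `x` is redundant in `S`,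
contradicting minimality; so every such relation forces `x ∈ {p, q, r}`. Rewriting
`a⁻¹ * b = c⁻¹ * d` as `d = c * a⁻¹ * b` gives `d = a`, and then as `c = a * b⁻¹ * a` gives
`c = b`; hence `a⁻¹ * b = b⁻¹ * a = (a⁻¹ * b)⁻¹`.
-/

namespace Subgroup

variable {G : Type*} [Group G]

theorem notMem_closure_erase_of_card_le [DecidableEq G] {S : Finset G}
    (hgen : closure (S : Set G) = ⊤)
    (hmin : ∀ T : Finset G, closure (T : Set G) = ⊤ → S.card ≤ T.card)
    {x : G} (hx : x ∈ S) : x ∉ closure (S.erase x : Set G) := by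
  intro hmem
  have hgen' : closure (S.erase x : Set G) = ⊤ := by
    rw [eq_top_iff, ← hgen, closure_le]
    intro s hs
    rcases eq_or_ne s x with rfl | hsx
    · exact hmem
    · exact subset_closure (Finset.mem_erase.2 ⟨hsx, hs⟩)
  exact (Finset.card_erase_lt_of_mem hx).not_ge (hmin _ hgen')

theorem eq_or_eq_or_eq_of_eq_mul_inv_mul {S : Finset G}
    (hgen : closure (S : Set G) = ⊤)
    (hmin : ∀ T : Finset G, closure (T : Set G) = ⊤ → S.card ≤ T.card)
    {x p q r : G} (hx : x ∈ S) (hp : p ∈ S) (hq : q ∈ S) (hr : r ∈ S)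
    (h : x = p * q⁻¹ * r) : x = p ∨ x = q ∨ x = r := by
  classical
  by_contra! hne
  obtain ⟨hxp, hxq, hxr⟩ := hne
  have mem {y : G} (hy : y ∈ S) (hyx : y ≠ x) : y ∈ closure (S.erase x : Set G) :=
    subset_closure (Finset.mem_erase.2 ⟨hyx, hy⟩)
  have hprod : p * q⁻¹ * r ∈ closure (S.erase x : Set G) :=
    mul_mem (mul_mem (mem hp hxp.symm) (inv_mem (mem hq hxq.symm))) (mem hr hxr.symm)
  exact notMem_closure_erase_of_card_le hgen hmin hx (h ▸ hprod)

end Subgroup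

/-- Let `S` be a minimal generating set of `G`. If
`a⁻¹b = c⁻¹d ≠ e` for elements `a, b, c, d ∈ S` with `(a,b) ≠ (c,d)`, then
`a = d`, `b = c`, and `a⁻¹b` has order two. -/
theorem stmt5 {G : Type*} [Group G] (S : Finset G)
    (hgen : Subgroup.closure (S : Set G) = ⊤)
    (hmin : ∀ T : Finset G, Subgroup.closure (T : Set G) = ⊤ → S.card ≤ T.card)
    (a b c d : G) (ha : a ∈ S) (hb : b ∈ S) (hc : c ∈ S) (hd : d ∈ S)
    (heq : a⁻¹ * b = c⁻¹ * d) (hne : a⁻¹ * b ≠ 1)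
    (hpair : (a, b) ≠ (c, d)) :
    a = d ∧ b = c ∧ (a⁻¹ * b) ^ 2 = 1 := by
  have hac : a ≠ c := by
    rintro rfl
    exact hpair (by rw [mul_left_cancel heq])
  have hda : d = a := by
    rcases Subgroup.eq_or_eq_or_eq_of_eq_mul_inv_mul hgen hmin hd hc ha hb
      (by rw [mul_assoc, heq, mul_inv_cancel_left]) with rfl | rfl | rfl
    · exact absurd (by rw [heq, inv_mul_cancel]) hne
    · rfl
    · exact absurd (inv_injective (mul_right_cancel heq)) hac
  subst d
  have hinv : b⁻¹ * a = a⁻¹ * c := by simpa using congrArg (·⁻¹) heq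
  have hcb : c = b := by
    rcases Subgroup.eq_or_eq_or_eq_of_eq_mul_inv_mul hgen hmin hc ha hb ha
      (by rw [mul_assoc, hinv, mul_inv_cancel_left]) with rfl | rfl | rfl
    · exact absurd rfl hac
    · rfl
    · exact absurd rfl hac
  subst c
  refine ⟨rfl, rfl, ?_⟩
  rw [sq]
  nth_rewrite 2 [heq]
  group
end

section
/- Let G₁ and G₂ be groups and G = G₁ * G₂ their free product. If a, b, c, d ∈ G₁ ∪ G₂ (viewed in G) satisfy a⁻¹b = c⁻¹d ≠ e, then either (a,b) = (c,d), or a = d, b = c and (a⁻¹b)² = e, or all four elements a, b, c, d lie in the same factor G_i. -/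
/-!
If `a⁻¹ * b` lies in a factor, then the pair `(a, b)` lies in that factor, since the two factors
meet only in `1`; the same then holds for `(c, d)`. Otherwise `a⁻¹` and `b` are non-trivial
elements of different factors, so `a⁻¹ * b` is a reduced word of length two, and its letters are
recovered from `c⁻¹ * d` by the projections `fst` and `snd` onto the factors. The only case these
projections cannot rule out is `inl x * inr y = inr y * inl x`, which contradicts uniqueness of
reduced words.
-/

open Monoid Coprod

theorem Subgroup.mem_and_mem_of_inv_mul_mem {G : Type*} [Group G] {H K : Subgroup G}
    (hHK : Disjoint H K) {a b : G} (ha : a ∈ H ∨ a ∈ K) (hb : b ∈ H ∨ b ∈ K)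
    (hab : a⁻¹ * b ∈ H) (hne : a⁻¹ * b ≠ 1) : a ∈ H ∧ b ∈ H := by
  rcases ha with ha | ha
  · exact ⟨ha, by simpa using H.mul_mem ha hab⟩
  rcases hb with hb | hb
  · exact ⟨by simpa using H.mul_mem hb (H.inv_mem hab), hb⟩
  · exact absurd (Subgroup.disjoint_def.mp hHK hab (K.mul_mem (K.inv_mem ha) hb)) hne

namespace Monoid.CoprodI
variable {ι : Type*} {M : ι → Type*} [∀ i, Monoid (M i)]

theorem Word.fstIdx_of_mul_of_smul_empty [DecidableEq ι] [∀ i, DecidableEq (M i)] {i j : ι}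
    (hij : i ≠ j) {x : M i} {y : M j} (hx : x ≠ 1) (hy : y ≠ 1) :
    ((of x * of y : CoprodI M) • (empty : Word M)).fstIdx = some i := by
  have h₁ : (empty : Word M).fstIdx ≠ some j := (Option.some_ne_none j).symm
  have h₂ : (cons y empty h₁ hy).fstIdx ≠ some i := by simpa using hij.symm
  rw [mul_smul, ← cons_eq_smul (h1 := h₁) (h2 := hy), ← cons_eq_smul (h1 := h₂) (h2 := hx),
    fstIdx_cons]

theorem of_mul_of_ne_of_mul_of {i j : ι} (hij : i ≠ j) {x : M i} {y : M j} (hx : x ≠ 1)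
    (hy : y ≠ 1) : of x * of y ≠ of y * of x := by
  classical
  intro h
  have := Word.fstIdx_of_mul_of_smul_empty hij hx hy
  rw [h, Word.fstIdx_of_mul_of_smul_empty hij.symm hy hx] at this
  exact hij (Option.some_injective _ this).symm

end Monoid.CoprodI

namespace Monoid.Coprod

universe u v

/-- `CoprodI` needs a family of monoids in a single universe. -/
def Summand (M : Type u) (N : Type v) : Bool → Type (max u v)
  | false => ULift M
  | true => ULift N

variable {M : Type u} {N : Type v} [Monoid M] [Monoid N]

instance : ∀ b, Monoid (Summand M N b)
  | false => inferInstanceAs (Monoid (ULift M))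
  | true => inferInstanceAs (Monoid (ULift N))

def toCoprodI : M ∗ N →* CoprodI (Summand M N) :=
  lift ((CoprodI.of (i := false)).comp (MulEquiv.ulift.symm : M ≃* ULift M).toMonoidHom)
    ((CoprodI.of (i := true)).comp (MulEquiv.ulift.symm : N ≃* ULift N).toMonoidHom)

@[simp]
theorem toCoprodI_inl (x : M) : toCoprodI (inl x : M ∗ N) = CoprodI.of (i := false) (ULift.up x) :=
  rfl

@[simp]
theorem toCoprodI_inr (y : N) : toCoprodI (inr y : M ∗ N) = CoprodI.of (i := true) (ULift.up y) :=
  rfl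

theorem inl_mul_inr_ne_inr_mul_inl {x : M} {y : N} (hx : x ≠ 1) (hy : y ≠ 1) :
    (inl x * inr y : M ∗ N) ≠ inr y * inl x := fun h ↦
  CoprodI.of_mul_of_ne_of_mul_of (M := Summand M N) Bool.false_ne_true
    (x := ULift.up x) (y := ULift.up y) (mt (congrArg ULift.down) hx)
    (mt (congrArg ULift.down) hy)
    (by simpa using congrArg toCoprodI h)

theorem swap_mem_range_inl_union_range_inr {u : M ∗ N}
    (hu : u ∈ Set.range inl ∪ Set.range inr) :
    swap M N u ∈ Set.range inl ∪ Set.range inr := by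
  rcases hu with ⟨p, rfl⟩ | ⟨p, rfl⟩
  exacts [.inr ⟨p, rfl⟩, .inl ⟨p, rfl⟩]

theorem eq_inl_and_eq_inr_of_inl_mul_inr_eq_mul {x : M} {y : N} (hx : x ≠ 1) (hy : y ≠ 1)
    {u v : M ∗ N} (hu : u ∈ Set.range inl ∪ Set.range inr)
    (hv : v ∈ Set.range inl ∪ Set.range inr) (h : inl x * inr y = u * v) :
    u = inl x ∧ v = inr y := by
  have hfst := congrArg fst h
  have hsnd := congrArg snd h
  rcases hu with ⟨p, rfl⟩ | ⟨p, rfl⟩ <;> rcases hv with ⟨q, rfl⟩ | ⟨q, rfl⟩ <;>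
    simp only [map_mul, fst_apply_inl, fst_apply_inr, snd_apply_inl, snd_apply_inr, mul_one,
      one_mul] at hfst hsnd
  · exact absurd hsnd hy
  · exact ⟨hfst ▸ rfl, hsnd ▸ rfl⟩
  · subst hfst hsnd
    exact absurd h (inl_mul_inr_ne_inr_mul_inl hx hy)
  · exact absurd hfst hx

theorem eq_and_eq_of_mul_eq_mul_of_notMem {u v u' v' : M ∗ N}
    (hu : u ∈ Set.range inl ∪ Set.range inr) (hv : v ∈ Set.range inl ∪ Set.range inr)
    (hu' : u' ∈ Set.range inl ∪ Set.range inr) (hv' : v' ∈ Set.range inl ∪ Set.range inr)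
    (h : u * v = u' * v') (huv : u * v ∉ Set.range inl ∪ Set.range inr) :
    u = u' ∧ v = v' := by
  rcases hu with ⟨p, rfl⟩ | ⟨p, rfl⟩ <;> rcases hv with ⟨q, rfl⟩ | ⟨q, rfl⟩
  · exact absurd (.inl ⟨p * q, map_mul ..⟩) huv
  · have hp : p ≠ 1 := by rintro rfl; exact huv (.inr ⟨q, by simp⟩)
    have hq : q ≠ 1 := by rintro rfl; exact huv (.inl ⟨p, by simp⟩)
    obtain ⟨rfl, rfl⟩ := eq_inl_and_eq_inr_of_inl_mul_inr_eq_mul hp hq hu' hv' h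
    exact ⟨rfl, rfl⟩
  · have hp : p ≠ 1 := by rintro rfl; exact huv (.inl ⟨q, by simp⟩)
    have hq : q ≠ 1 := by rintro rfl; exact huv (.inr ⟨p, by simp⟩)
    obtain ⟨hu'', hv''⟩ := eq_inl_and_eq_inr_of_inl_mul_inr_eq_mul hp hq
      (swap_mem_range_inl_union_range_inr hu') (swap_mem_range_inl_union_range_inr hv')
      (by simpa using congrArg (swap M N) h)
    exact ⟨swap_injective (by simpa using hu''.symm), swap_injective (by simpa using hv''.symm)⟩
  · exact absurd (.inr ⟨p * q, map_mul ..⟩) huv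

theorem disjoint_range_inl_range_inr {G₁ G₂ : Type*} [Group G₁] [Group G₂] :
    Disjoint (inl : G₁ →* G₁ ∗ G₂).range (inr : G₂ →* G₁ ∗ G₂).range := by
  rw [Subgroup.disjoint_def]
  rintro _ ⟨x, rfl⟩ ⟨y, hy⟩
  rw [show x = 1 by simpa using (congrArg fst hy).symm, map_one]

end Monoid.Coprod

/-- In a free product `G = G₁ * G₂`, if `a, b, c, d ∈ G₁ ∪ G₂`
satisfy `a⁻¹b = c⁻¹d ≠ e`, then either `(a,b) = (c,d)`, or `a = d`, `b = c` and
`(a⁻¹b)² = e`, or all four elements lie in a common factor. -/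
theorem stmt8 {G₁ G₂ : Type*} [Group G₁] [Group G₂]
    (a b c d : G₁ ∗ G₂)
    (hmem : ∀ x ∈ ({a, b, c, d} : Set (G₁ ∗ G₂)),
      x ∈ Set.range (inl : G₁ →* G₁ ∗ G₂) ∪ Set.range (inr : G₂ →* G₁ ∗ G₂))
    (heq : a⁻¹ * b = c⁻¹ * d) (hne : a⁻¹ * b ≠ 1) :
    (a = c ∧ b = d)
    ∨ (a = d ∧ b = c ∧ (a⁻¹ * b) ^ 2 = 1)
    ∨ (∀ x ∈ ({a, b, c, d} : Set (G₁ ∗ G₂)), x ∈ Set.range (inl : G₁ →* G₁ ∗ G₂))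
    ∨ (∀ x ∈ ({a, b, c, d} : Set (G₁ ∗ G₂)), x ∈ Set.range (inr : G₂ →* G₁ ∗ G₂)) := by
  have hS : ∀ x ∈ ({a, b, c, d} : Set (G₁ ∗ G₂)), x ∈ inl.range ∨ x ∈ inr.range := hmem
  have ha := hS a (by simp)
  have hb := hS b (by simp)
  have hc := hS c (by simp)
  have hd := hS d (by simp)
  by_cases h₁ : a⁻¹ * b ∈ inl.range
  · have hab := Subgroup.mem_and_mem_of_inv_mul_mem disjoint_range_inl_range_inr ha hb h₁ hne
    have hcd := Subgroup.mem_and_mem_of_inv_mul_mem disjoint_range_inl_range_inr hc hd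
      (heq ▸ h₁) (heq ▸ hne)
    refine .inr <| .inr <| .inl ?_
    rintro x (rfl | rfl | rfl | rfl)
    exacts [hab.1, hab.2, hcd.1, hcd.2]
  by_cases h₂ : a⁻¹ * b ∈ inr.range
  · have hab := Subgroup.mem_and_mem_of_inv_mul_mem disjoint_range_inl_range_inr.symm
      ha.symm hb.symm h₂ hne
    have hcd := Subgroup.mem_and_mem_of_inv_mul_mem disjoint_range_inl_range_inr.symm
      hc.symm hd.symm (heq ▸ h₂) (heq ▸ hne)
    refine .inr <| .inr <| .inr ?_
    rintro x (rfl | rfl | rfl | rfl)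
    exacts [hab.1, hab.2, hcd.1, hcd.2]
  have inv_mem_union {x : G₁ ∗ G₂} (hx : x ∈ inl.range ∨ x ∈ inr.range) :
      x⁻¹ ∈ Set.range inl ∪ Set.range inr :=
    hx.imp inv_mem inv_mem
  obtain ⟨hac, hbd⟩ := eq_and_eq_of_mul_eq_mul_of_notMem (inv_mem_union ha) hb
    (inv_mem_union hc) hd heq (not_or.mpr ⟨h₁, h₂⟩)
  exact .inl ⟨inv_injective hac, hbd⟩
end
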